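/- arXiv:2108.05439 — 6 statements merged into one kernel-verified Lean document; each statement's English description precedes it below -/
import Mathlib

section
/- For ρ > 0, m ≥ 1, and nonnegative reals A_1, …, A_m, clip_ρ[A_1 + ⋯ + A_m] ≤ 2·(clip_{ρ/(2m)}[A_1] + ⋯ + clip_{ρ/(2m)}[A_m]), where clip_ρ[z] := z·1{z ≥ ρ}. -/
noncomputable def clip (ρ z : ℝ) : ℝ := if ρ ≤ z then z else 0

theorem clip_sum (m : ℕ) (hm : 1 ≤ m) (ρ : ℝ) (hρ : 0 < ρ)
    (A : Fin m → ℝ) (hA : ∀ i, 0 ≤ A i) :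
    clip ρ (∑ i, A i) ≤ 2 * ∑ i, clip (ρ / (2 * m)) (A i) := by
  have hm' : (0:ℝ) < m := by exact_mod_cast hm
  set t := ρ / (2 * m) with ht
  have hclip_nonneg : ∀ i, 0 ≤ clip t (A i) := by
    intro i; unfold clip; split <;> simp [hA i]
  have hsum_nonneg : 0 ≤ ∑ i, clip t (A i) :=
    Finset.sum_nonneg fun i _ => hclip_nonneg i
  rw [clip]
  split
  · rename_i hS
    have hlb : ∀ i, A i - t ≤ clip t (A i) := by
      intro i; unfold clip; split
      · have : 0 < t := by positivity
        linarith
      · rename_i h; push_neg at h; linarith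
    have : (∑ i, A i) - m * t ≤ ∑ i, clip t (A i) := by
      calc (∑ i, A i) - m * t = ∑ i, (A i - t) := by
            rw [Finset.sum_sub_distrib]; simp [mul_comm]
        _ ≤ _ := Finset.sum_le_sum fun i _ => hlb i
    have hmt : (m:ℝ) * t = ρ / 2 := by
      rw [ht]; field_simp
    linarith
  · linarith
end

section
/- (Optimistic planning) Let Q*_h be the optimal Q-function of a finite-horizon MDP with transition P, horizon H, and rewards r_h ∈ [0,1], so Q*_{H+1} ≡ 0 and Q*_h(x,a) = r_h(x,a) + Σ_y P(y|x,a)·max_{a'} Q*_{h+1}(y,a'). Let Q_h be defined via an empirical transition P̂ and a bonus b by Q_{H+1} ≡ 0 and Q_h(x,a) = min(H, r_h(x,a) + b(x,a) + Σ_y P̂(y|x,a)·max_{a'} Q_{h+1}(y,a')). If for all x, a, h one has |Σ_y (P̂(y|x,a) − P(y|x,a))·V*_{h+1}(y)| ≤ b(x,a), where V*_{h+1}(y) = max_a Q*_{h+1}(y,a), and Q*_h(x,a) ≤ H for all h, x, a, then Q_h(x,a) ≥ Q*_h(x,a) for every h, x, a. -/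
/-- Optimistic planning: the UCB Q-estimates dominate the true optimal Q-values. -/
theorem optimistic_planning
    {S A : Type*} [Fintype S] [Fintype A] [Nonempty A]
    (H : ℕ) (hH : 0 < H)
    (P Phat : S → A → S → ℝ) (r : ℕ → S → A → ℝ) (b : S → A → ℝ)
    (hPpos : ∀ x a y, 0 ≤ P x a y) (hPsum : ∀ x a, ∑ y, P x a y = 1)
    (hPhatpos : ∀ x a y, 0 ≤ Phat x a y) (hPhatsum : ∀ x a, ∑ y, Phat x a y = 1)
    (hr : ∀ h x a, r h x a ∈ Set.Icc (0 : ℝ) 1) (hb : ∀ x a, 0 ≤ b x a)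
    (Qstar : ℕ → S → A → ℝ) (Vs : ℕ → S → ℝ)
    (Q : ℕ → S → A → ℝ)
    (hQstop : ∀ x a, Qstar H x a = 0)
    (hQs : ∀ h < H, ∀ x a, Qstar h x a = r h x a + ∑ y, P x a y * Vs (h + 1) y)
    (hVs : ∀ h x, Vs h x = Finset.univ.sup' Finset.univ_nonempty (fun a => Qstar h x a))
    (hQtop : ∀ x a, Q H x a = 0)
    (hQ : ∀ h < H, ∀ x a,
      Q h x a = min (H : ℝ)
        (r h x a + b x a + ∑ y, Phat x a y *
          (Finset.univ.sup' Finset.univ_nonempty (fun a' => Q (h + 1) y a'))))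
    (hconc : ∀ h x a, |∑ y, (Phat x a y - P x a y) * Vs (h + 1) y| ≤ b x a)
    (hQsbd : ∀ h x a, Qstar h x a ≤ (H : ℝ)) :
    ∀ h ≤ H, ∀ x a, Qstar h x a ≤ Q h x a := by
  have main : ∀ d h, h + d = H → ∀ x a, Qstar h x a ≤ Q h x a := by
    intro d
    induction d with
    | zero =>
      intro h hh x a
      simp only [Nat.add_zero] at hh
      subst hh
      rw [hQstop, hQtop]
    | succ d ih =>
      intro h hh x a
      have hlt : h < H := by omega
      have ih' : ∀ y a', Qstar (h + 1) y a' ≤ Q (h + 1) y a' :=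
        ih (h + 1) (by omega)
      have hV : ∀ y, Vs (h + 1) y ≤
          Finset.univ.sup' Finset.univ_nonempty (fun a' => Q (h + 1) y a') := by
        intro y
        rw [hVs]
        exact Finset.sup'_le _ _ fun a' _ =>
          le_trans (ih' y a') (Finset.le_sup' _ (Finset.mem_univ a'))
      rw [hQs h hlt, hQ h hlt]
      refine le_min (by linarith [hQsbd h x a, hQs h hlt x a]) ?_
      have hsum : ∑ y, Phat x a y * Vs (h + 1) y ≤
          ∑ y, Phat x a y * Finset.univ.sup' Finset.univ_nonempty (fun a' => Q (h + 1) y a') :=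
        Finset.sum_le_sum fun y _ => mul_le_mul_of_nonneg_left (hV y) (hPhatpos x a y)
      have habs := (abs_le.mp (hconc h x a)).1
      have hsplit : ∑ y, (Phat x a y - P x a y) * Vs (h + 1) y
          = (∑ y, Phat x a y * Vs (h + 1) y) - ∑ y, P x a y * Vs (h + 1) y := by
        rw [← Finset.sum_sub_distrib]
        exact Finset.sum_congr rfl fun y _ => by ring
      rw [hsplit] at habs
      linarith
  intro h hle x a
  exact main (H - h) h (by omega) x a
end

section
/- Let V₁, V₂ : S → ℝ with 0 ≤ V₁(y) ≤ V₂(y) ≤ M, and p, p̂ probability distributions on a finite set S of size S̄ such that |p̂(y) − p(y)| ≤ √(2 p(y) ι / N) + (2ι)/(3N) for every y, where ι, N > 0. Then for any H ≥ 1, |Σ_y (p̂(y) − p(y))·(V₂(y) − V₁(y))| ≤ (1/H)·Σ_y p(y)·(V₂(y) − V₁(y)) + 2·M·H·S̄·ι / N. -/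
lemma lower_order_aux (M ι N H P d : ℝ) (hM : 0 ≤ M) (hι : 0 < ι) (hN : 0 < N) (hH : 1 ≤ H)
    (hHpos : 0 < H) (hd0 : 0 ≤ d) (hdM : d ≤ M) (hp0 : 0 ≤ P) :
    (P * d / H + 2 * H * d * ι / N) / 2 + 2 * ι / (3 * N) * d
      ≤ (1/H) * (P * d) + 2*M*H*ι/N := by
  have hrN : (0:ℝ) < 1 / N := by positivity
  have e1 : (0:ℝ) ≤ H * (1/N) * ι * (M - d) :=
    mul_nonneg (mul_nonneg (mul_nonneg hHpos.le hrN.le) hι.le) (sub_nonneg.2 hdM)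
  have e2 : (0:ℝ) ≤ (1/N) * ι * (M - d) :=
    mul_nonneg (mul_nonneg hrN.le hι.le) (sub_nonneg.2 hdM)
  have e3 : (0:ℝ) ≤ M * (1/N) * ι * (H - 1) :=
    mul_nonneg (mul_nonneg (mul_nonneg hM hrN.le) hι.le) (sub_nonneg.2 hH)
  have e4 : (0:ℝ) ≤ M * H * (1/N) * ι :=
    mul_nonneg (mul_nonneg (mul_nonneg hM hHpos.le) hrN.le) hι.le
  have e5 : (0:ℝ) ≤ P * d / H := by positivity
  have lhsrw : (P * d / H + 2 * H * d * ι / N) / 2 + 2 * ι / (3 * N) * d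
      = (P * d / H)/2 + H * d * ι * (1/N) + (2/3) * ι * (1/N) * d := by
    field_simp
  have rhsrw : (1/H) * (P * d) + 2*M*H*ι/N = (P * d / H) + 2*M*H*ι*(1/N) := by
    field_simp
  rw [lhsrw, rhsrw]
  nlinarith [e1, e2, e3, e4, e5]


theorem lower_order_term_linear
    {S : Type*} [Fintype S]
    (M ι N H : ℝ) (hM : 0 ≤ M) (hι : 0 < ι) (hN : 0 < N) (hH : 1 ≤ H)
    (p phat : S → ℝ) (V₁ V₂ : S → ℝ)
    (hp : ∀ y, 0 ≤ p y) (hpsum : ∑ y, p y = 1)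
    (hphat : ∀ y, 0 ≤ phat y) (hphatsum : ∑ y, phat y = 1)
    (hV : ∀ y, 0 ≤ V₁ y ∧ V₁ y ≤ V₂ y ∧ V₂ y ≤ M)
    (hclose : ∀ y, |phat y - p y| ≤ Real.sqrt (2 * p y * ι / N) + 2 * ι / (3 * N)) :
    |∑ y, (phat y - p y) * (V₂ y - V₁ y)| ≤
      (1 / H) * (∑ y, p y * (V₂ y - V₁ y)) + 2 * M * H * (Fintype.card S) * ι / N := by
  have hHpos : 0 < H := lt_of_lt_of_le one_pos hH
  have key : ∀ y, |phat y - p y| * (V₂ y - V₁ y) ≤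
      (1/H) * (p y * (V₂ y - V₁ y)) + 2*M*H*ι/N := by
    intro y
    obtain ⟨h1, h2, h3⟩ := hV y
    have hd0 : 0 ≤ V₂ y - V₁ y := by linarith
    have hdM : V₂ y - V₁ y ≤ M := by linarith
    have hp0 := hp y
    have ha : 0 ≤ p y * (V₂ y - V₁ y) / H := by positivity
    have hb : 0 ≤ 2 * H * (V₂ y - V₁ y) * ι / N := by positivity
    have hab : (p y * (V₂ y - V₁ y) / H) * (2 * H * (V₂ y - V₁ y) * ι / N)
        = (2 * p y * ι / N) * (V₂ y - V₁ y)^2 := by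
      field_simp
    have hsqrt_eq : Real.sqrt ((p y * (V₂ y - V₁ y) / H) * (2 * H * (V₂ y - V₁ y) * ι / N))
        = Real.sqrt (2 * p y * ι / N) * (V₂ y - V₁ y) := by
      rw [hab, Real.sqrt_mul (by positivity), Real.sqrt_sq hd0]
    have hsq : Real.sqrt (2 * p y * ι / N) * (V₂ y - V₁ y) ≤
        (p y * (V₂ y - V₁ y) / H + 2 * H * (V₂ y - V₁ y) * ι / N) / 2 := by
      rw [← hsqrt_eq, Real.sqrt_mul ha]
      nlinarith [Real.sq_sqrt ha, Real.sq_sqrt hb,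
        sq_nonneg (Real.sqrt (p y * (V₂ y - V₁ y) / H) - Real.sqrt (2 * H * (V₂ y - V₁ y) * ι / N))]
    have step1 : |phat y - p y| * (V₂ y - V₁ y) ≤
        (Real.sqrt (2 * p y * ι / N) + 2 * ι / (3 * N)) * (V₂ y - V₁ y) :=
      mul_le_mul_of_nonneg_right (hclose y) hd0
    have hlast : (p y * (V₂ y - V₁ y) / H + 2 * H * (V₂ y - V₁ y) * ι / N) / 2
        + 2 * ι / (3 * N) * (V₂ y - V₁ y) ≤ (1/H) * (p y * (V₂ y - V₁ y)) + 2*M*H*ι/N :=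
      lower_order_aux M ι N H (p y) (V₂ y - V₁ y) hM hι hN hH hHpos hd0 hdM hp0
    calc |phat y - p y| * (V₂ y - V₁ y)
        ≤ (Real.sqrt (2 * p y * ι / N) + 2 * ι / (3 * N)) * (V₂ y - V₁ y) := step1
      _ = Real.sqrt (2 * p y * ι / N) * (V₂ y - V₁ y)
          + 2 * ι / (3 * N) * (V₂ y - V₁ y) := by ring
      _ ≤ (p y * (V₂ y - V₁ y) / H + 2 * H * (V₂ y - V₁ y) * ι / N) / 2
          + 2 * ι / (3 * N) * (V₂ y - V₁ y) := by linarith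
      _ ≤ (1/H) * (p y * (V₂ y - V₁ y)) + 2*M*H*ι/N := hlast
  calc |∑ y, (phat y - p y) * (V₂ y - V₁ y)|
      ≤ ∑ y, |(phat y - p y) * (V₂ y - V₁ y)| := Finset.abs_sum_le_sum_abs _ _
    _ = ∑ y, |phat y - p y| * (V₂ y - V₁ y) := by
        refine Finset.sum_congr rfl fun y _ => ?_
        obtain ⟨h1, h2, h3⟩ := hV y
        rw [abs_mul, abs_of_nonneg (by linarith : (0:ℝ) ≤ V₂ y - V₁ y)]
    _ ≤ ∑ y, ((1/H) * (p y * (V₂ y - V₁ y)) + 2*M*H*ι/N) :=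
        Finset.sum_le_sum fun y _ => key y
    _ = (1 / H) * (∑ y, p y * (V₂ y - V₁ y)) + 2 * M * H * (Fintype.card S) * ι / N := by
        rw [Finset.sum_add_distrib, ← Finset.mul_sum, Finset.sum_const, Finset.card_univ]
        push_cast
        ring
end

section
/- (Clipped gap bound on planning error) Let V*, Q* be the optimal value/Q functions of a finite-horizon MDP with horizon H, and let π be any policy. Then V*_1(x₁) − V^π_1(x₁) ≤ E_{π,P}[ Σ_{h=1}^H clip_ρ[V*_h(x_h) − Q*_h(x_h, a_h)] ] + H·ρ, for any ρ > 0, where clip_ρ[z] = z·1{z ≥ ρ}. -/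
/-- Clipped gap bound on the planning error: the sub-optimality of a policy `π` is at
most the expected sum of the `ρ`-clipped gaps along its trajectory, plus `H·ρ`.  The
expected sum of clipped gaps is expressed by the exact backward recursion `W`. -/
theorem clipped_gap_planning_error_bound
    {S A : Type*} [Fintype S] [Fintype A] [Nonempty A]
    (H : ℕ) (hH : 0 < H)
    (P : S → A → S → ℝ) (r : ℕ → S → A → ℝ)
    (hPpos : ∀ x a y, 0 ≤ P x a y) (hPsum : ∀ x a, ∑ y, P x a y = 1)
    (hr : ∀ h x a, r h x a ∈ Set.Icc (0 : ℝ) 1)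
    (ρ : ℝ) (hρ : 0 < ρ)
    (π : ℕ → S → A)
    (Qpi : ℕ → S → A → ℝ) (Vpi : ℕ → S → ℝ)
    (Qstar : ℕ → S → A → ℝ) (Vstar : ℕ → S → ℝ)
    (W : ℕ → S → ℝ)
    (hVpitop : ∀ x, Vpi H x = 0)
    (hQpi : ∀ h < H, ∀ x a, Qpi h x a = r h x a + ∑ y, P x a y * Vpi (h + 1) y)
    (hVpi : ∀ h < H, ∀ x, Vpi h x = Qpi h x (π h x))
    (hVstartop : ∀ x, Vstar H x = 0)
    (hQstar : ∀ h < H, ∀ x a, Qstar h x a = r h x a + ∑ y, P x a y * Vstar (h + 1) y)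
    (hVstar : ∀ h < H, ∀ x,
      Vstar h x = Finset.univ.sup' Finset.univ_nonempty (fun a => Qstar h x a))
    (hWtop : ∀ x, W H x = 0)
    (hW : ∀ h < H, ∀ x,
      W h x = clip ρ (Vstar h x - Qstar h x (π h x)) + ∑ y, P x (π h x) y * W (h + 1) y) :
    ∀ x₁, Vstar 0 x₁ - Vpi 0 x₁ ≤ W 0 x₁ + H * ρ := by
  -- Main induction: for all n, h with h + n = H,
  -- Vstar h x - Vpi h x ≤ W h x + n * ρ
  have key : ∀ n h, h + n = H → ∀ x, Vstar h x - Vpi h x ≤ W h x + n * ρ := by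
    intro n
    induction n with
    | zero =>
      intro h hh x
      simp only [Nat.add_zero] at hh
      subst hh
      simp [hVpitop, hVstartop, hWtop]
    | succ n ih =>
      intro h hh x
      have hhH : h < H := by omega
      have hrec : h + 1 + n = H := by omega
      set a := π h x with ha
      -- gap ≥ 0
      have hgap : 0 ≤ Vstar h x - Qstar h x a := by
        rw [hVstar h hhH x]
        have := Finset.le_sup' (fun a => Qstar h x a) (Finset.mem_univ a)
        linarith
      -- gap ≤ clip gap + ρ
      have hclip : Vstar h x - Qstar h x a ≤ clip ρ (Vstar h x - Qstar h x a) + ρ := by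
        unfold clip
        split_ifs with hz
        · linarith
        · push_neg at hz; linarith
      -- Qstar - Qpi = ∑ P * (Vstar - Vpi)
      have hdiff : Qstar h x a - Qpi h x a
          = ∑ y, P x a y * (Vstar (h+1) y - Vpi (h+1) y) := by
        rw [hQstar h hhH x a, hQpi h hhH x a]
        rw [Finset.sum_congr rfl (fun y _ => mul_sub (P x a y) _ _), Finset.sum_sub_distrib]
        ring
      have hsum : ∑ y, P x a y * (Vstar (h+1) y - Vpi (h+1) y)
          ≤ ∑ y, P x a y * (W (h+1) y + n * ρ) := by
        apply Finset.sum_le_sum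
        intro y _
        exact mul_le_mul_of_nonneg_left (ih (h+1) hrec y) (hPpos x a y)
      have hsum2 : ∑ y, P x a y * (W (h+1) y + n * ρ)
          = (∑ y, P x a y * W (h+1) y) + n * ρ := by
        rw [Finset.sum_congr rfl (fun y _ => mul_add (P x a y) _ _), Finset.sum_add_distrib,
          ← Finset.sum_mul, hPsum, one_mul]
      rw [hW h hhH x, hVpi h hhH x]
      have : Vstar h x - Qpi h x a
          = (Vstar h x - Qstar h x a) + (Qstar h x a - Qpi h x a) := by ring
      rw [this, hdiff]
      push_cast
      calc (Vstar h x - Qstar h x a) + ∑ y, P x a y * (Vstar (h+1) y - Vpi (h+1) y)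
          ≤ (clip ρ (Vstar h x - Qstar h x a) + ρ)
            + ((∑ y, P x a y * W (h+1) y) + n * ρ) := by
            have := hsum2 ▸ hsum; linarith
        _ = clip ρ (Vstar h x - Qstar h x a) + (∑ y, P x a y * W (h+1) y) + (n + 1) * ρ := by
            ring
      -- done; goal should match
  intro x₁
  have := key H 0 (by omega) x₁
  simpa using this
end

section
/- (Truncated expected sum lower bound by truncated value recursion) Let c : S×A → [0,∞), H ≥ 1, P a transition kernel, and π a policy. Define Ṽ^π by Ṽ^π_{H+1} ≡ 0, Q̃^π_h(x,a) = min(H, c(x,a) + Σ_y P(y|x,a)·Ṽ^π_{h+1}(y)), Ṽ^π_h(x) = Q̃^π_h(x, π_h(x)). Then Ṽ^π_1(x₁) ≥ E_{π,P}[ min(H, Σ_{h=1}^H c(x_h, a_h)) ], where the expectation is over trajectories of π under P starting at x₁. -/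
/-- The truncated bonus value recursion dominates the expected truncated cumulative
bonus: `Ṽ^π₁(x₁) ≥ E_{π,P}[min(H, Σₕ c(xₕ,aₕ))]`.  The expectation of the truncated
sum is expressed by the exact backward recursion `G` carrying the accumulated sum. -/
theorem truncated_value_ge_expected_truncated_sum
    {S A : Type*} [Fintype S] [Fintype A] [Nonempty A]
    (H : ℕ) (hH : 1 ≤ H)
    (P : S → A → S → ℝ) (c : S → A → ℝ)
    (hPpos : ∀ x a y, 0 ≤ P x a y) (hPsum : ∀ x a, ∑ y, P x a y = 1)
    (hc : ∀ x a, 0 ≤ c x a)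
    (π : ℕ → S → A)
    (Qtil : ℕ → S → A → ℝ) (Vtil : ℕ → S → ℝ)
    (hVtiltop : ∀ x, Vtil H x = 0)
    (hQtil : ∀ h < H, ∀ x a,
      Qtil h x a = min (H : ℝ) (c x a + ∑ y, P x a y * Vtil (h + 1) y))
    (hVtil : ∀ h < H, ∀ x, Vtil h x = Qtil h x (π h x))
    (G : ℕ → ℝ → S → ℝ)
    (hGtop : ∀ s x, G H s x = min (H : ℝ) s)
    (hG : ∀ h < H, ∀ s x,
      G h s x = ∑ y, P x (π h x) y * G (h + 1) (s + c x (π h x)) y) :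
    ∀ x₁, G 0 0 x₁ ≤ Vtil 0 x₁ := by
  have hVnn : ∀ d h, h + d = H → ∀ x, (0:ℝ) ≤ Vtil h x := by
    intro d
    induction d with
    | zero =>
      intro h hh x
      have : h = H := by omega
      subst this
      rw [hVtiltop]
    | succ d ih =>
      intro h hh x
      have hlt : h < H := by omega
      rw [hVtil h hlt, hQtil h hlt]
      apply le_min
      · exact_mod_cast Nat.zero_le H
      · have hs : 0 ≤ ∑ y, P x (π h x) y * Vtil (h+1) y :=
          Finset.sum_nonneg fun y _ => mul_nonneg (hPpos _ _ _) (ih (h+1) (by omega) y)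
        linarith [hc x (π h x)]
  have key : ∀ d h, h + d = H → ∀ s, (0:ℝ) ≤ s → ∀ x,
      G h s x ≤ min (H:ℝ) (s + Vtil h x) := by
    intro d
    induction d with
    | zero =>
      intro h hh s hs x
      have : h = H := by omega
      subst this
      rw [hGtop, hVtiltop]
      exact min_le_min le_rfl (by linarith)
    | succ d ih =>
      intro h hh s hs x
      have hlt : h < H := by omega
      set a := π h x with ha
      rw [hG h hlt]
      have hstep : ∀ y, G (h+1) (s + c x a) y ≤ min (H:ℝ) (s + c x a + Vtil (h+1) y) :=
        fun y => ih (h+1) (by omega) (s + c x a) (by linarith [hc x a]) y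
      have h1 : ∑ y, P x a y * G (h+1) (s + c x a) y ≤ (H:ℝ) := by
        calc ∑ y, P x a y * G (h+1) (s + c x a) y
            ≤ ∑ y, P x a y * (H:ℝ) := Finset.sum_le_sum fun y _ =>
              mul_le_mul_of_nonneg_left ((hstep y).trans (min_le_left _ _)) (hPpos _ _ _)
          _ = (H:ℝ) := by rw [← Finset.sum_mul, hPsum]; ring
      have h2 : ∑ y, P x a y * G (h+1) (s + c x a) y
          ≤ s + c x a + ∑ y, P x a y * Vtil (h+1) y := by
        calc ∑ y, P x a y * G (h+1) (s + c x a) y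
            ≤ ∑ y, P x a y * (s + c x a + Vtil (h+1) y) := Finset.sum_le_sum fun y _ =>
              mul_le_mul_of_nonneg_left ((hstep y).trans (min_le_right _ _)) (hPpos _ _ _)
          _ = (∑ y, P x a y) * (s + c x a) + ∑ y, P x a y * Vtil (h+1) y := by
              rw [Finset.sum_mul, ← Finset.sum_add_distrib]
              apply Finset.sum_congr rfl
              intro y _
              ring
          _ = _ := by rw [hPsum]; ring
      rw [hVtil h hlt, hQtil h hlt, ← ha]
      apply le_min h1
      rcases le_total ((H:ℝ)) (c x a + ∑ y, P x a y * Vtil (h+1) y) with hcase | hcase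
      · rw [min_eq_left hcase]; linarith
      · rw [min_eq_right hcase]; linarith
  intro x₁
  have h0 := key H 0 (by omega) 0 le_rfl x₁
  calc G 0 0 x₁ ≤ min (H:ℝ) (0 + Vtil 0 x₁) := h0
    _ ≤ 0 + Vtil 0 x₁ := min_le_right _ _
    _ = Vtil 0 x₁ := by ring
end

section
/- (Exact planning under small value-estimation error with gap) Let an MDP have optimal value functions V*_h, Q*_h and minimum sub-optimality gap ρ > 0, i.e., for all h, x, a, either V*_h(x) = Q*_h(x,a) or V*_h(x) − Q*_h(x,a) ≥ ρ. Let P̂ be an empirical transition such that |Σ_y (P̂(y|x,a) − P(y|x,a))·V*_{h+1}(y)| < ρ/(2H) for all x, a, h, and let π be the greedy policy with respect to the optimal value functions computed under P̂ (i.e., π_h(x) ∈ argmax_a [r_h(x,a) + Σ_y P̂(y|x,a)·V̂*_{h+1}(y)] with V̂* the optimal value under P̂). Then V*_h(x) = V^π_h(x) for all h and x, i.e., π is exactly optimal. -/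
/-- Exact planning with a sampling simulator: if the empirical transition estimates the
expectations of the true optimal values to within `ρ/(2H)`, where `ρ` is the minimum
sub-optimality gap, then the greedy policy with respect to the optimal values of the
empirical MDP is exactly optimal in the true MDP. -/
theorem exact_planning_under_gap
    {S A : Type*} [Fintype S] [Fintype A] [Nonempty A]
    (H : ℕ) (hH : 0 < H)
    (P Phat : S → A → S → ℝ) (r : ℕ → S → A → ℝ)
    (hPpos : ∀ x a y, 0 ≤ P x a y) (hPsum : ∀ x a, ∑ y, P x a y = 1)
    (hPhatpos : ∀ x a y, 0 ≤ Phat x a y) (hPhatsum : ∀ x a, ∑ y, Phat x a y = 1)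
    (hr : ∀ h x a, r h x a ∈ Set.Icc (0 : ℝ) 1)
    (ρ : ℝ) (hρ : 0 < ρ)
    (Qstar : ℕ → S → A → ℝ) (Vstar : ℕ → S → ℝ)
    (hVstartop : ∀ x, Vstar H x = 0)
    (hQstar : ∀ h < H, ∀ x a, Qstar h x a = r h x a + ∑ y, P x a y * Vstar (h + 1) y)
    (hVstar : ∀ h < H, ∀ x,
      Vstar h x = Finset.univ.sup' Finset.univ_nonempty (fun a => Qstar h x a))
    (hgap : ∀ h < H, ∀ x a, Vstar h x = Qstar h x a ∨ ρ ≤ Vstar h x - Qstar h x a)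
    (Qhat : ℕ → S → A → ℝ) (Vhat : ℕ → S → ℝ)
    (hVhattop : ∀ x, Vhat H x = 0)
    (hQhat : ∀ h < H, ∀ x a, Qhat h x a = r h x a + ∑ y, Phat x a y * Vhat (h + 1) y)
    (hVhat : ∀ h < H, ∀ x,
      Vhat h x = Finset.univ.sup' Finset.univ_nonempty (fun a => Qhat h x a))
    (hclose : ∀ h < H, ∀ x a,
      |∑ y, (Phat x a y - P x a y) * Vstar (h + 1) y| < ρ / (2 * H))
    (π : ℕ → S → A)
    (hgreedy : ∀ h < H, ∀ x, Qhat h x (π h x) = Vhat h x)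
    (Qpi : ℕ → S → A → ℝ) (Vpi : ℕ → S → ℝ)
    (hVpitop : ∀ x, Vpi H x = 0)
    (hQpi : ∀ h < H, ∀ x a, Qpi h x a = r h x a + ∑ y, P x a y * Vpi (h + 1) y)
    (hVpi : ∀ h < H, ∀ x, Vpi h x = Qpi h x (π h x)) :
    ∀ h ≤ H, ∀ x, Vstar h x = Vpi h x := by
  set c := ρ / (2 * H) with hc
  have hHpos : (0 : ℝ) < H := by exact_mod_cast hH
  have hcpos : 0 < c := div_pos hρ (by positivity)
  -- Key Q-value comparison: if values at step h+1 are within n*c, then Q-values at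
  -- step h are within (n+1)*c (strictly).
  have QB : ∀ n : ℕ, ∀ h, h + (n + 1) = H →
      (∀ y, |Vhat (h + 1) y - Vstar (h + 1) y| ≤ (n : ℝ) * c) →
      ∀ x a, |Qhat h x a - Qstar h x a| < ((n : ℝ) + 1) * c := by
    intro n h hh ihV x a
    have hhH : h < H := by omega
    have hB : |∑ y, Phat x a y * (Vhat (h + 1) y - Vstar (h + 1) y)| ≤ (n : ℝ) * c := by
      calc |∑ y, Phat x a y * (Vhat (h + 1) y - Vstar (h + 1) y)|
          ≤ ∑ y, |Phat x a y * (Vhat (h + 1) y - Vstar (h + 1) y)| :=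
            Finset.abs_sum_le_sum_abs _ _
        _ ≤ ∑ y, Phat x a y * ((n : ℝ) * c) := by
            apply Finset.sum_le_sum
            intro y _
            rw [abs_mul, abs_of_nonneg (hPhatpos x a y)]
            exact mul_le_mul_of_nonneg_left (ihV y) (hPhatpos x a y)
        _ = (n : ℝ) * c := by rw [← Finset.sum_mul, hPhatsum, one_mul]
    have hA := hclose h hhH x a
    have key : ∑ y, (Phat x a y - P x a y) * Vstar (h + 1) y
        + ∑ y, Phat x a y * (Vhat (h + 1) y - Vstar (h + 1) y)
        = ∑ y, Phat x a y * Vhat (h + 1) y - ∑ y, P x a y * Vstar (h + 1) y := by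
      rw [← Finset.sum_add_distrib, ← Finset.sum_sub_distrib]
      exact Finset.sum_congr rfl (fun y _ => by ring)
    rw [hQhat h hhH x a, hQstar h hhH x a]
    have hrewrite : (r h x a + ∑ y, Phat x a y * Vhat (h + 1) y)
        - (r h x a + ∑ y, P x a y * Vstar (h + 1) y)
        = ∑ y, (Phat x a y - P x a y) * Vstar (h + 1) y
          + ∑ y, Phat x a y * (Vhat (h + 1) y - Vstar (h + 1) y) := by
      rw [key]; ring
    rw [hrewrite]
    calc |∑ y, (Phat x a y - P x a y) * Vstar (h + 1) y
          + ∑ y, Phat x a y * (Vhat (h + 1) y - Vstar (h + 1) y)|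
        ≤ |∑ y, (Phat x a y - P x a y) * Vstar (h + 1) y|
          + |∑ y, Phat x a y * (Vhat (h + 1) y - Vstar (h + 1) y)| := abs_add_le _ _
      _ < c + (n : ℝ) * c := by rw [hc]; exact add_lt_add_of_lt_of_le hA (by rw [← hc]; exact hB)
      _ = ((n : ℝ) + 1) * c := by ring
  -- Claim A: value estimation error grows linearly going backwards.
  have A : ∀ n : ℕ, ∀ h, h + n = H → ∀ x, |Vhat h x - Vstar h x| ≤ (n : ℝ) * c := by
    intro n
    induction n with
    | zero =>
      intro h hh x
      have : h = H := by omega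
      subst this
      simp [hVhattop, hVstartop]
    | succ n ih =>
      intro h hh x
      have hhH : h < H := by omega
      have ihV : ∀ y, |Vhat (h + 1) y - Vstar (h + 1) y| ≤ (n : ℝ) * c :=
        ih (h + 1) (by omega)
      have hQ : ∀ a, |Qhat h x a - Qstar h x a| < ((n : ℝ) + 1) * c :=
        QB n h (by omega) ihV x
      have h1 : Vhat h x ≤ Vstar h x + ((n : ℝ) + 1) * c := by
        rw [hVhat h hhH x]
        apply Finset.sup'_le
        intro a _
        have hq := (abs_lt.mp (hQ a)).2
        have hle : Qstar h x a ≤ Vstar h x := by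
          rw [hVstar h hhH x]
          exact Finset.le_sup' _ (Finset.mem_univ a)
        linarith
      have h2 : Vstar h x ≤ Vhat h x + ((n : ℝ) + 1) * c := by
        rw [hVstar h hhH x]
        apply Finset.sup'_le
        intro a _
        have hq := (abs_lt.mp (hQ a)).1
        have hle : Qhat h x a ≤ Vhat h x := by
          rw [hVhat h hhH x]
          exact Finset.le_sup' _ (Finset.mem_univ a)
        linarith
      have : ((n + 1 : ℕ) : ℝ) = (n : ℝ) + 1 := by push_cast; ring
      rw [this]
      exact abs_le.mpr ⟨by linarith, by linarith⟩
  -- Claim B: the greedy policy is exactly optimal, by backward induction.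
  have B : ∀ n : ℕ, ∀ h, h + n = H → ∀ x, Vstar h x = Vpi h x := by
    intro n
    induction n with
    | zero =>
      intro h hh x
      have : h = H := by omega
      subst this
      rw [hVstartop, hVpitop]
    | succ n ih =>
      intro h hh x
      have hhH : h < H := by omega
      set a := π h x with ha
      have ihV : ∀ y, |Vhat (h + 1) y - Vstar (h + 1) y| ≤ (n : ℝ) * c :=
        A n (h + 1) (by omega)
      have hQa : |Qhat h x a - Qstar h x a| < ((n : ℝ) + 1) * c := QB n h (by omega) ihV x a
      have hVd : |Vhat h x - Vstar h x| ≤ ((n + 1 : ℕ) : ℝ) * c := A (n + 1) h (by omega) x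
      have hVd' : Vstar h x - Vhat h x ≤ ((n : ℝ) + 1) * c := by
        have := (abs_le.mp hVd).1
        push_cast at this
        linarith
      have heq : Vstar h x = Qstar h x a := by
        rcases hgap h hhH x a with he | hge
        · exact he
        · exfalso
          have hg : Qhat h x a = Vhat h x := hgreedy h hhH x
          have h2 : Qhat h x a - Qstar h x a < ((n : ℝ) + 1) * c := (abs_lt.mp hQa).2
          have hn1 : ((n : ℝ) + 1) ≤ H := by exact_mod_cast (by omega : n + 1 ≤ H)
          have hceq : c * (2 * H) = ρ := by rw [hc]; field_simp
          have hcsum : 2 * ((n : ℝ) + 1) * c ≤ ρ := by nlinarith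
          linarith
      calc Vstar h x = Qstar h x a := heq
        _ = r h x a + ∑ y, P x a y * Vstar (h + 1) y := hQstar h hhH x a
        _ = r h x a + ∑ y, P x a y * Vpi (h + 1) y := by
            congr 1
            exact Finset.sum_congr rfl (fun y _ => by rw [ih (h + 1) (by omega) y])
        _ = Qpi h x a := (hQpi h hhH x a).symm
        _ = Vpi h x := (hVpi h hhH x).symm
  intro h hle x
  exact B (H - h) h (by omega) x
end
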